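/- Fix α > 1ize, σ > 0, ρ ≥ 0, and n ≥ 1. Define f(h) = (1/(α-1)) · log( (α/(2α-1)) exp((α-1)|h|/σ) + ((α-1)/(2α-1)) exp(-α|h|/σ) ) for h ∈ ℝ. Then the supremum of Σ_{i=1}^n f(h_i) over all h ∈ ℝ^n with Σ_i |h_i| ≤ ρ equals f(ρ), attained at h = (ρ, 0, …, 0). -/

import Mathlib

open Real Finset

/-- Order-α Rényi divergence between `Laplace(0,σ)` and `Laplace(h,σ)` as a function of
the shift `h`. -/
noncomputable def lapRenyi (α σ h : ℝ) : ℝ :=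
  (1 / (α - 1)) * Real.log
    ((α / (2 * α - 1)) * Real.exp ((α - 1) * |h| / σ) +
      ((α - 1) / (2 * α - 1)) * Real.exp (-α * |h| / σ))

noncomputable def lapG (α σ t : ℝ) : ℝ :=
  (α / (2 * α - 1)) * Real.exp ((α - 1) * t / σ) +
    ((α - 1) / (2 * α - 1)) * Real.exp (-α * t / σ)

lemma lapRenyi_eq (α σ h : ℝ) :
    lapRenyi α σ h = (1 / (α - 1)) * Real.log (lapG α σ |h|) := rfl

lemma lapG_pos {α : ℝ} (hα : 1 < α) (σ t : ℝ) : 0 < lapG α σ t := by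
  have h1 : 0 < 2 * α - 1 := by linarith
  have h2 : 0 < α := by linarith
  have h3 : 0 < α - 1 := by linarith
  exact add_pos (mul_pos (div_pos h2 h1) (Real.exp_pos _))
    (mul_pos (div_pos h3 h1) (Real.exp_pos _))

lemma lapG_pq {α : ℝ} (hα : 1 < α) :
    α / (2 * α - 1) + (α - 1) / (2 * α - 1) = 1 := by
  have h1 : 2 * α - 1 ≠ 0 := by intro h; nlinarith
  rw [← add_div, div_eq_one_iff_eq h1]
  ring

lemma lapG_zero {α : ℝ} (hα : 1 < α) (σ : ℝ) : lapG α σ 0 = 1 := by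
  unfold lapG
  rw [mul_zero, zero_div, Real.exp_zero, mul_zero, zero_div, Real.exp_zero,
    mul_one, mul_one, lapG_pq hα]

lemma lapG_one_le {α σ : ℝ} (hα : 1 < α) (hσ : 0 < σ) {t : ℝ} (ht : 0 ≤ t) :
    1 ≤ lapG α σ t := by
  have h1 : 0 < 2 * α - 1 := by linarith
  have hp : 0 < α / (2 * α - 1) := div_pos (by linarith) h1
  have hq : 0 < (α - 1) / (2 * α - 1) := div_pos (by linarith) h1
  have hpq := lapG_pq hα
  have e1 := Real.add_one_le_exp ((α - 1) * t / σ)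
  have e2 := Real.add_one_le_exp (-α * t / σ)
  have hzero : α / (2 * α - 1) * ((α - 1) * t / σ) +
      (α - 1) / (2 * α - 1) * (-α * t / σ) = 0 := by
    field_simp
    ring
  have b1 := mul_le_mul_of_nonneg_left e1 hp.le
  have b2 := mul_le_mul_of_nonneg_left e2 hq.le
  unfold lapG
  nlinarith [b1, b2, hzero, hpq]

lemma lapG_key_alg (p q ea1 ea2 eb1 eb2 : ℝ) (hpq : p + q = 1)
    (hp : 0 ≤ p) (hq : 0 ≤ q) (h1 : ea2 ≤ ea1) (h2 : eb2 ≤ eb1) :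
    (p * ea1 + q * ea2) * (p * eb1 + q * eb2) ≤
      p * (ea1 * eb1) + q * (ea2 * eb2) := by
  have hq' : q = 1 - p := by linarith
  subst hq'
  nlinarith [mul_nonneg (mul_nonneg hp hq)
    (mul_nonneg (sub_nonneg.2 h1) (sub_nonneg.2 h2))]

lemma lapG_superadd {α σ : ℝ} (hα : 1 < α) (hσ : 0 < σ) {a b : ℝ}
    (ha : 0 ≤ a) (hb : 0 ≤ b) :
    lapG α σ a * lapG α σ b ≤ lapG α σ (a + b) := by
  have h1 : 0 < 2 * α - 1 := by linarith
  set p := α / (2 * α - 1) with hp_def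
  set q := (α - 1) / (2 * α - 1) with hq_def
  have hp : 0 < p := div_pos (by linarith) h1
  have hq : 0 < q := div_pos (by linarith) h1
  have hpq : p + q = 1 := lapG_pq hα
  set ea1 := Real.exp ((α - 1) * a / σ) with hea1
  set ea2 := Real.exp (-α * a / σ) with hea2
  set eb1 := Real.exp ((α - 1) * b / σ) with heb1
  set eb2 := Real.exp (-α * b / σ) with heb2
  have key1 : Real.exp ((α - 1) * (a + b) / σ) = ea1 * eb1 := by
    rw [hea1, heb1, ← Real.exp_add]
    congr 1
    ring
  have key2 : Real.exp (-α * (a + b) / σ) = ea2 * eb2 := by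
    rw [hea2, heb2, ← Real.exp_add]
    congr 1
    ring
  have hle_a : ea2 ≤ ea1 := by
    rw [hea1, hea2]
    apply Real.exp_le_exp.2
    rw [div_le_div_iff_of_pos_right hσ]
    nlinarith [mul_nonneg ha (by linarith : (0:ℝ) ≤ 2 * α - 1)]
  have hle_b : eb2 ≤ eb1 := by
    rw [heb1, heb2]
    apply Real.exp_le_exp.2
    rw [div_le_div_iff_of_pos_right hσ]
    nlinarith [mul_nonneg hb (by linarith : (0:ℝ) ≤ 2 * α - 1)]
  show (p * ea1 + q * ea2) * (p * eb1 + q * eb2) ≤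
    p * Real.exp ((α - 1) * (a + b) / σ) + q * Real.exp (-α * (a + b) / σ)
  rw [key1, key2]
  exact lapG_key_alg p q ea1 ea2 eb1 eb2 hpq hp.le hq.le hle_a hle_b

lemma lapG_mono {α σ : ℝ} (hα : 1 < α) (hσ : 0 < σ) {s t : ℝ}
    (hs : 0 ≤ s) (hst : s ≤ t) : lapG α σ s ≤ lapG α σ t := by
  have h1 := lapG_superadd hα hσ hs (by linarith : (0:ℝ) ≤ t - s)
  have h2 := lapG_one_le hα hσ (by linarith : (0:ℝ) ≤ t - s)
  have h3 := lapG_pos hα σ s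
  have : s + (t - s) = t := by ring
  rw [this] at h1
  nlinarith

lemma sum_lapRenyi_le {α σ : ℝ} (hα : 1 < α) (hσ : 0 < σ) {ι : Type*}
    (h : ι → ℝ) (s : Finset ι) :
    (∑ i ∈ s, lapRenyi α σ (h i)) ≤
      (1 / (α - 1)) * Real.log (lapG α σ (∑ i ∈ s, |h i|)) := by
  have hc : 0 ≤ 1 / (α - 1) := by
    have h1 : (0:ℝ) < α - 1 := by linarith
    positivity
  induction s using Finset.cons_induction with
  | empty => simp [lapG_zero hα]
  | cons a s ha ih =>
    rw [Finset.sum_cons, Finset.sum_cons, lapRenyi_eq]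
    have hS : 0 ≤ ∑ i ∈ s, |h i| := Finset.sum_nonneg fun i _ => abs_nonneg _
    have haa : 0 ≤ |h a| := abs_nonneg _
    have key := lapG_superadd hα hσ haa hS
    have p1 := lapG_pos hα σ |h a|
    have p2 := lapG_pos hα σ (∑ i ∈ s, |h i|)
    calc (1 / (α - 1)) * Real.log (lapG α σ |h a|) + ∑ i ∈ s, lapRenyi α σ (h i)
        ≤ (1 / (α - 1)) * Real.log (lapG α σ |h a|) +
            (1 / (α - 1)) * Real.log (lapG α σ (∑ i ∈ s, |h i|)) := by linarith
      _ = (1 / (α - 1)) *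
            Real.log (lapG α σ |h a| * lapG α σ (∑ i ∈ s, |h i|)) := by
          rw [Real.log_mul p1.ne' p2.ne']; ring
      _ ≤ (1 / (α - 1)) * Real.log (lapG α σ (|h a| + ∑ i ∈ s, |h i|)) := by
          apply mul_le_mul_of_nonneg_left _ hc
          exact Real.log_le_log (mul_pos p1 p2) key

/-- The supremum of `∑ i, f (h i)` over `‖h‖₁ ≤ ρ` equals `f ρ`, attained at
`h = (ρ, 0, …, 0)`. -/
theorem stmt1 (α σ ρ : ℝ) (n : ℕ) (hn : 1 ≤ n) (hα : 1 < α) (hσ : 0 < σ) (hρ : 0 ≤ ρ) :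
    IsGreatest
      {S : ℝ | ∃ h : Fin n → ℝ, (∑ i, |h i|) ≤ ρ ∧ S = ∑ i, lapRenyi α σ (h i)}
      (lapRenyi α σ ρ) ∧
    (∑ i : Fin n, lapRenyi α σ (if (i : ℕ) = 0 then ρ else 0)) = lapRenyi α σ ρ := by
  have hzero : lapRenyi α σ 0 = 0 := by
    rw [lapRenyi_eq, abs_zero, lapG_zero hα, Real.log_one, mul_zero]
  have hattain : (∑ i : Fin n, lapRenyi α σ (if (i : ℕ) = 0 then ρ else 0))
      = lapRenyi α σ ρ := by
    have hcong : ∀ i : Fin n, i ∈ Finset.univ →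
        lapRenyi α σ (if (i : ℕ) = 0 then ρ else 0) =
          if i = (⟨0, hn⟩ : Fin n) then lapRenyi α σ ρ else 0 := by
      intro i _
      by_cases hi : (i : ℕ) = 0
      · rw [if_pos hi, if_pos (Fin.ext hi)]
      · rw [if_neg hi, if_neg (fun h => hi (by rw [h])), hzero]
    rw [Finset.sum_congr rfl hcong, Finset.sum_ite_eq' Finset.univ _ _]
    simp
  have habs : (∑ i : Fin n, |if (i : ℕ) = 0 then ρ else 0|) = ρ := by
    have hcong : ∀ i : Fin n, i ∈ Finset.univ →
        |if (i : ℕ) = 0 then ρ else 0| =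
          if i = (⟨0, hn⟩ : Fin n) then ρ else 0 := by
      intro i _
      by_cases hi : (i : ℕ) = 0
      · rw [if_pos hi, if_pos (Fin.ext hi), abs_of_nonneg hρ]
      · rw [if_neg hi, if_neg (fun h => hi (by rw [h])), abs_zero]
    rw [Finset.sum_congr rfl hcong, Finset.sum_ite_eq' Finset.univ _ _]
    simp
  refine ⟨⟨⟨fun i => if (i : ℕ) = 0 then ρ else 0, le_of_eq habs, hattain.symm⟩, ?_⟩,
    hattain⟩
  rintro S ⟨h, hsum, rfl⟩
  have h1 := sum_lapRenyi_le hα hσ h Finset.univ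
  have hT : 0 ≤ ∑ i : Fin n, |h i| := Finset.sum_nonneg fun i _ => abs_nonneg _
  have h2 : lapG α σ (∑ i : Fin n, |h i|) ≤ lapG α σ ρ := lapG_mono hα hσ hT hsum
  have hc : 0 ≤ 1 / (α - 1) := by
    have h1 : (0:ℝ) < α - 1 := by linarith
    positivity
  have h3 : Real.log (lapG α σ (∑ i : Fin n, |h i|)) ≤ Real.log (lapG α σ ρ) :=
    Real.log_le_log (lapG_pos hα σ _) h2
  have h4 : lapRenyi α σ ρ = (1 / (α - 1)) * Real.log (lapG α σ ρ) := by
    rw [lapRenyi_eq, abs_of_nonneg hρ]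
  rw [h4]
  calc (∑ i : Fin n, lapRenyi α σ (h i))
      ≤ (1 / (α - 1)) * Real.log (lapG α σ (∑ i : Fin n, |h i|)) := h1
    _ ≤ (1 / (α - 1)) * Real.log (lapG α σ ρ) :=
        mul_le_mul_of_nonneg_left h3 hc
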